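/- arXiv:2009.06548 — 4 statements merged into one kernel-verified Lean document; each statement's English description precedes it below -/
import Mathlib

section
/- Let J : ℝ^d → ℝ be differentiable with an L-Lipschitz gradient (L > 0). Let θ, g ∈ ℝ^d, let 0 < η ≤ 1/(4L), set θ' = θ + η g and ε = g − ∇J(θ). Then J(θ) − J(θ') ≤ −(η/4) ‖∇J(θ)‖² + (3η/4) ‖ε‖². -/
/-! With `G = ∇J(θ)` and `ε = g - G`, the `L`-smoothness lower bound
`J(θ + ηg) ≥ J(θ) + η⟪G, g⟫ - (Lη²/2)‖g‖²` and the polarization identity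
`2⟪G, g⟫ = ‖G‖² + ‖g‖² - ‖ε‖²` give `J(θ) - J(θ + ηg) ≤ (η/2)(‖ε‖² - ‖G‖²)` as soon as `Lη ≤ 1`;
this is already stronger than the claimed bound. -/

open InnerProductSpace

section LipschitzGradient

variable {E : Type*} [NormedAddCommGroup E] [InnerProductSpace ℝ E] [CompleteSpace E]
  {f : E → ℝ} {L : ℝ}

theorem DifferentiableAt.hasDerivAt_comp_add_smul {x δ : E} {t : ℝ}
    (hf : DifferentiableAt ℝ f (x + t • δ)) :
    HasDerivAt (fun s : ℝ => f (x + s • δ)) ⟪gradient f (x + t • δ), δ⟫_ℝ t := by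
  have hline : HasDerivAt (fun s : ℝ => x + s • δ) δ t := by
    simpa using ((hasDerivAt_id t).smul_const δ).const_add x
  exact hf.hasGradientAt.hasFDerivAt.comp_hasDerivAt t hline

theorem neg_mul_sq_le_inner_gradient_sub
    (hlip : ∀ x y, ‖gradient f x - gradient f y‖ ≤ L * ‖x - y‖) (x δ : E) {t : ℝ} (ht : 0 ≤ t) :
    -(L * t * ‖δ‖ ^ 2) ≤ ⟪gradient f (x + t • δ) - gradient f x, δ⟫_ℝ := by
  have hstep : ‖gradient f (x + t • δ) - gradient f x‖ ≤ L * t * ‖δ‖ := by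
    simpa [norm_smul, abs_of_nonneg ht, mul_assoc] using hlip (x + t • δ) x
  calc -(L * t * ‖δ‖ ^ 2) ≤ -(‖gradient f (x + t • δ) - gradient f x‖ * ‖δ‖) := by
        rw [sq, ← mul_assoc]
        exact neg_le_neg (mul_le_mul_of_nonneg_right hstep (norm_nonneg δ))
    _ ≤ -|⟪gradient f (x + t • δ) - gradient f x, δ⟫_ℝ| :=
        neg_le_neg (abs_real_inner_le_norm _ _)
    _ ≤ _ := neg_abs_le _

theorem le_image_add_of_lipschitz_gradient (hf : Differentiable ℝ f)
    (hlip : ∀ x y, ‖gradient f x - gradient f y‖ ≤ L * ‖x - y‖) (x δ : E) :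
    f x + ⟪gradient f x, δ⟫_ℝ - L / 2 * ‖δ‖ ^ 2 ≤ f (x + δ) := by
  -- `ψ` has derivative `⟪∇f(x + tδ) - ∇f(x), δ⟫ + Ltδ²`, which is nonnegative for `t ≥ 0`.
  set ψ : ℝ → ℝ := fun t => f (x + t • δ) - t * ⟪gradient f x, δ⟫_ℝ + L / 2 * t ^ 2 * ‖δ‖ ^ 2
  have hψ : ∀ t, HasDerivAt ψ
      (⟪gradient f (x + t • δ) - gradient f x, δ⟫_ℝ + L * t * ‖δ‖ ^ 2) t := by
    intro t
    have hquad := ((hasDerivAt_pow 2 t).const_mul (L / 2)).mul_const (‖δ‖ ^ 2)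
    refine (((hf _).hasDerivAt_comp_add_smul.sub
      ((hasDerivAt_id' t).mul_const ⟪gradient f x, δ⟫_ℝ)).add hquad).congr_deriv ?_
    simp only [inner_sub_left, Nat.cast_ofNat, Nat.reduceSub, pow_one]
    ring
  have hmono : MonotoneOn ψ (Set.Ici 0) := by
    refine monotoneOn_of_hasDerivWithinAt_nonneg (convex_Ici 0)
      (fun t _ => (hψ t).continuousAt.continuousWithinAt)
      (fun t _ => (hψ t).hasDerivWithinAt) fun t ht => ?_
    rw [interior_Ici] at ht
    linarith [neg_mul_sq_le_inner_gradient_sub hlip x δ (le_of_lt ht)]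
  have h01 : ψ 0 ≤ ψ 1 := hmono Set.self_mem_Ici (Set.mem_Ici.2 zero_le_one) zero_le_one
  simp only [ψ, zero_smul, add_zero, one_smul] at h01
  linarith

theorem sub_image_add_smul_le_of_lipschitz_gradient (hf : Differentiable ℝ f)
    (hlip : ∀ x y, ‖gradient f x - gradient f y‖ ≤ L * ‖x - y‖) (x g : E) {η : ℝ}
    (hη : 0 ≤ η) (hLη : L * η ≤ 1) :
    f x - f (x + η • g) ≤ η / 2 * (‖g - gradient f x‖ ^ 2 - ‖gradient f x‖ ^ 2) := by
  have hlower := le_image_add_of_lipschitz_gradient hf hlip x (η • g)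
  rw [real_inner_smul_right, norm_smul, Real.norm_of_nonneg hη, mul_pow] at hlower
  have hpolar :
      ‖g - gradient f x‖ ^ 2 = ‖g‖ ^ 2 - 2 * ⟪gradient f x, g⟫_ℝ + ‖gradient f x‖ ^ 2 := by
    rw [norm_sub_sq_real, real_inner_comm]
  have hcurv : L * η ^ 2 * ‖g‖ ^ 2 ≤ η * ‖g‖ ^ 2 := by
    linarith [mul_le_mul_of_nonneg_right hLη (mul_nonneg hη (sq_nonneg ‖g‖))]
  rw [hpolar]
  linarith

end LipschitzGradient

theorem inexact_gradient_ascent_step_general (d : ℕ)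
    (J : EuclideanSpace ℝ (Fin d) → ℝ) (L : ℝ)
    (hdiff : Differentiable ℝ J)
    (hlip : ∀ θ₁ θ₂, ‖gradient J θ₁ - gradient J θ₂‖ ≤ L * ‖θ₁ - θ₂‖)
    (θ g : EuclideanSpace ℝ (Fin d)) (η : ℝ) (hη0 : 0 < η) (hη : η ≤ 1 / (4 * L)) :
    J θ - J (θ + η • g) ≤
      -(η / 4) * ‖gradient J θ‖ ^ 2 + (3 * η / 4) * ‖g - gradient J θ‖ ^ 2 := by
  have hL : 0 < 4 * L := one_div_pos.1 (hη0.trans_le hη)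
  have hLη : L * η ≤ 1 := by
    rw [le_div_iff₀ hL] at hη
    linarith
  have hstep := sub_image_add_smul_le_of_lipschitz_gradient hdiff hlip θ g hη0.le hLη
  linarith [mul_nonneg hη0.le
    (add_nonneg (sq_nonneg ‖gradient J θ‖) (sq_nonneg ‖g - gradient J θ‖))]

/-- Lemma 1 (deterministic form): if `J` is differentiable with an `L`-Lipschitz gradient,
`0 < η ≤ 1/(4L)`, `θ' = θ + η g`, and `ε = g − ∇J(θ)`, then
`J(θ) − J(θ') ≤ −(η/4)‖∇J(θ)‖² + (3η/4)‖ε‖²`. -/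
theorem inexact_gradient_ascent_step (d : ℕ)
    (J : EuclideanSpace ℝ (Fin d) → ℝ) (L : ℝ) (hL : 0 < L)
    (hdiff : Differentiable ℝ J)
    (hlip : ∀ θ₁ θ₂, ‖gradient J θ₁ - gradient J θ₂‖ ≤ L * ‖θ₁ - θ₂‖)
    (θ g : EuclideanSpace ℝ (Fin d)) (η : ℝ) (hη0 : 0 < η) (hη : η ≤ 1 / (4 * L)) :
    J θ - J (θ + η • g) ≤
      -(η / 4) * ‖gradient J θ‖ ^ 2 + (3 * η / 4) * ‖g - gradient J θ‖ ^ 2 :=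
  inexact_gradient_ascent_step_general d J L hdiff hlip θ g η hη0 hη
end

section
/- Let (Ω, F, P) be a probability space, J : ℝ^d → ℝ differentiable, and Z : ℝ^d × Ω → ℝ^d a stochastic gradient estimator such that for every θ: (i) Z(θ, ·) is integrable with E[Z(θ, ·)] = ∇J(θ); (ii) for all ω and all θ₁, θ₂, ‖Z(θ₁, ω) − Z(θ₂, ω)‖ ≤ L ‖θ₁ − θ₂‖ with L > 0; (iii) E[‖Z(θ, ·) − ∇J(θ)‖²] ≤ σ². Fix θ_{t−1}, g_{t−1} ∈ ℝ^d, η > 0, β ≥ 0, and let α = β η² with 0 ≤ α ≤ 1. Define θ_t = θ_{t−1} + η g_{t−1}, the STORM update g_t(ω) = Z(θ_t, ω) + (1 − α)(g_{t−1} − Z(θ_{t−1}, ω)), and the errors ε_t(ω) = g_t(ω) − ∇J(θ_t), ε_{t−1} = g_{t−1} − ∇J(θ_{t−1}). Then E[‖ε_t‖²]/η ≤ 2 β² η³ σ² + (1 − α)² (1 + 4 L² η²) ‖ε_{t−1}‖²/η + 4 (1 − α)² L² η ‖∇J(θ_{t−1})‖². -/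
open MeasureTheory

/-!
With `A = Z(θ_t) − ∇J(θ_t)` and `D = Z(θ_t) − Z(θ_{t−1}) − (∇J(θ_t) − ∇J(θ_{t−1}))`, both centred,
the new error is `ε_t = α A + (1 − α) D + (1 − α) ε_{t−1}`. The deterministic last term is
orthogonal in `L²` to the centred part, whose second moment is at most
`2α² E‖A‖² + 2(1 − α)² E‖D‖² ≤ 2α²σ² + 2(1 − α)² E‖D‖²` since `(a + b)² ≤ 2a² + 2b²`.
Centring does not increase the second moment and `‖Z(θ_t) − Z(θ_{t−1})‖ ≤ L η ‖g_{t−1}‖`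
pointwise, so `E‖D‖² ≤ L²η²‖g_{t−1}‖²`; finally
`‖g_{t−1}‖² ≤ 2‖ε_{t−1}‖² + 2‖∇J(θ_{t−1})‖²`.
-/

theorem norm_add_sq_le_two_mul {E : Type*} [SeminormedAddCommGroup E] (u v : E) :
    ‖u + v‖ ^ 2 ≤ 2 * (‖u‖ ^ 2 + ‖v‖ ^ 2) :=
  (pow_le_pow_left₀ (norm_nonneg _) (norm_add_le u v) 2).trans add_sq_le

section Normed

variable {Ω E : Type*} [MeasurableSpace Ω] {P : Measure Ω} [NormedAddCommGroup E]

theorem integral_norm_add_sq_le {U V : Ω → E} (hU : MemLp U 2 P) (hV : MemLp V 2 P) :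
    ∫ ω, ‖U ω + V ω‖ ^ 2 ∂P ≤ 2 * ∫ ω, ‖U ω‖ ^ 2 ∂P + 2 * ∫ ω, ‖V ω‖ ^ 2 ∂P := by
  have hU2 := (memLp_two_iff_integrable_sq_norm hU.1).1 hU
  have hV2 := (memLp_two_iff_integrable_sq_norm hV.1).1 hV
  calc ∫ ω, ‖U ω + V ω‖ ^ 2 ∂P ≤ ∫ ω, 2 * (‖U ω‖ ^ 2 + ‖V ω‖ ^ 2) ∂P :=
        integral_mono_of_nonneg (.of_forall fun _ => by positivity) ((hU2.add hV2).const_mul 2)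
          (.of_forall fun ω => norm_add_sq_le_two_mul (U ω) (V ω))
    _ = 2 * ∫ ω, ‖U ω‖ ^ 2 ∂P + 2 * ∫ ω, ‖V ω‖ ^ 2 ∂P := by
        rw [integral_const_mul, integral_add hU2 hV2, mul_add]

theorem integral_norm_smul_sq [NormedSpace ℝ E] (c : ℝ) (U : Ω → E) :
    ∫ ω, ‖c • U ω‖ ^ 2 ∂P = c ^ 2 * ∫ ω, ‖U ω‖ ^ 2 ∂P := by
  simp only [norm_smul, mul_pow, Real.norm_eq_abs, sq_abs, integral_const_mul]

theorem integral_norm_sq_le_of_norm_le [IsProbabilityMeasure P] {X : Ω → E} {C : ℝ}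
    (hC : ∀ ω, ‖X ω‖ ≤ C) : ∫ ω, ‖X ω‖ ^ 2 ∂P ≤ C ^ 2 := by
  calc ∫ ω, ‖X ω‖ ^ 2 ∂P ≤ ∫ _, C ^ 2 ∂P :=
        integral_mono_of_nonneg (.of_forall fun _ => by positivity) (integrable_const _)
          (.of_forall fun ω => pow_le_pow_left₀ (norm_nonneg _) (hC ω) 2)
    _ = C ^ 2 := by simp

theorem integral_sub_integral_eq_zero [NormedSpace ℝ E] [CompleteSpace E]
    [IsProbabilityMeasure P] {X : Ω → E} (hX : Integrable X P) :
    ∫ ω, (X ω - ∫ ω', X ω' ∂P) ∂P = 0 := by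
  rw [integral_sub hX (integrable_const _), integral_const]
  simp

end Normed

section InnerProduct

variable {Ω E : Type*} [MeasurableSpace Ω] {P : Measure Ω} [IsProbabilityMeasure P]
  [NormedAddCommGroup E] [InnerProductSpace ℝ E] [CompleteSpace E]

theorem integral_norm_add_const_sq {U : Ω → E} (hU : MemLp U 2 P) (hU0 : ∫ ω, U ω ∂P = 0)
    (c : E) : ∫ ω, ‖U ω + c‖ ^ 2 ∂P = ∫ ω, ‖U ω‖ ^ 2 ∂P + ‖c‖ ^ 2 := by
  have hU1 : Integrable U P := hU.integrable one_le_two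
  have hU2 := (memLp_two_iff_integrable_sq_norm hU.1).1 hU
  have hcross : ∫ ω, inner ℝ (U ω) c ∂P = 0 := by
    simp_rw [real_inner_comm c]
    rw [integral_inner hU1, hU0, inner_zero_right]
  have hlin : Integrable (fun ω => ‖U ω‖ ^ 2 + 2 * inner ℝ (U ω) c) P :=
    hU2.add ((hU1.inner_const c).const_mul 2)
  simp_rw [norm_add_sq_real]
  rw [integral_add hlin (integrable_const _), integral_add hU2 ((hU1.inner_const c).const_mul 2),
    integral_const_mul, hcross]
  simp

theorem integral_norm_sub_integral_sq_le {X : Ω → E} (hX : MemLp X 2 P) :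
    ∫ ω, ‖X ω - ∫ ω', X ω' ∂P‖ ^ 2 ∂P ≤ ∫ ω, ‖X ω‖ ^ 2 ∂P := by
  have h := integral_norm_add_const_sq (hX.sub (memLp_const _))
    (integral_sub_integral_eq_zero (hX.integrable one_le_two)) (∫ ω', X ω' ∂P)
  simp only [Pi.sub_apply, sub_add_cancel] at h
  rw [h]
  exact le_add_of_nonneg_right (sq_nonneg _)

theorem integral_norm_smul_add_smul_add_const_sq_le {A D : Ω → E} (hA : Integrable A P)
    (hA0 : ∫ ω, A ω ∂P = 0) (hD : MemLp D 2 P) (hD0 : ∫ ω, D ω ∂P = 0) (a b : ℝ) (c : E) :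
    ∫ ω, ‖a • A ω + b • D ω + c‖ ^ 2 ∂P ≤
      2 * a ^ 2 * ∫ ω, ‖A ω‖ ^ 2 ∂P + 2 * b ^ 2 * ∫ ω, ‖D ω‖ ^ 2 ∂P + ‖c‖ ^ 2 := by
  by_cases hint : Integrable (fun ω => ‖a • A ω + b • D ω + c‖ ^ 2) P
  swap
  · rw [integral_undef hint]
    have : 0 ≤ ∫ ω, ‖A ω‖ ^ 2 ∂P := integral_nonneg fun _ => by positivity
    have : 0 ≤ ∫ ω, ‖D ω‖ ^ 2 ∂P := integral_nonneg fun _ => by positivity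
    positivity
  set U : Ω → E := fun ω => a • A ω + b • D ω
  have hU : MemLp U 2 P := by
    have hU_aesm : AEStronglyMeasurable U P := (hA.1.const_smul a).add (hD.1.const_smul b)
    simpa using ((memLp_two_iff_integrable_sq_norm
      (hU_aesm.add aestronglyMeasurable_const)).2 hint).sub (memLp_const c)
  have hU0 : ∫ ω, U ω ∂P = 0 := by
    have hA1 : Integrable (fun ω => a • A ω) P := hA.smul a
    have hD1 : Integrable (fun ω => b • D ω) P := (hD.integrable one_le_two).smul b
    rw [integral_add hA1 hD1, integral_smul, integral_smul, hA0, hD0, smul_zero, smul_zero,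
      add_zero]
  have haA : MemLp (fun ω => a • A ω) 2 P := by
    have hAU : (fun ω => a • A ω) = U - b • D := by
      funext ω
      simp [U]
    rw [hAU]
    exact hU.sub (hD.const_smul b)
  calc ∫ ω, ‖U ω + c‖ ^ 2 ∂P = ∫ ω, ‖U ω‖ ^ 2 ∂P + ‖c‖ ^ 2 :=
        integral_norm_add_const_sq hU hU0 c
    _ ≤ 2 * ∫ ω, ‖a • A ω‖ ^ 2 ∂P + 2 * ∫ ω, ‖b • D ω‖ ^ 2 ∂P + ‖c‖ ^ 2 := by
        gcongr
        exact integral_norm_add_sq_le haA (hD.const_smul b)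
    _ = 2 * a ^ 2 * ∫ ω, ‖A ω‖ ^ 2 ∂P + 2 * b ^ 2 * ∫ ω, ‖D ω‖ ^ 2 ∂P + ‖c‖ ^ 2 := by
        rw [integral_norm_smul_sq, integral_norm_smul_sq]
        ring

theorem integral_norm_storm_error_sq_le {X' X : Ω → E} (hX' : Integrable X' P)
    (hX : Integrable X P) {σ C : ℝ} (hvar : ∫ ω, ‖X' ω - ∫ ω', X' ω' ∂P‖ ^ 2 ∂P ≤ σ ^ 2)
    (hlip : ∀ ω, ‖X' ω - X ω‖ ≤ C) (g : E) (α : ℝ) :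
    ∫ ω, ‖X' ω + (1 - α) • (g - X ω) - ∫ ω', X' ω' ∂P‖ ^ 2 ∂P ≤
      2 * α ^ 2 * σ ^ 2 + 2 * (1 - α) ^ 2 * C ^ 2 + (1 - α) ^ 2 * ‖g - ∫ ω', X ω' ∂P‖ ^ 2 := by
  have hXX : MemLp (fun ω => X' ω - X ω) 2 P := .of_bound (hX'.1.sub hX.1) C (.of_forall hlip)
  have hdecomp : ∀ ω, X' ω + (1 - α) • (g - X ω) - ∫ ω', X' ω' ∂P =
      α • (X' ω - ∫ ω', X' ω' ∂P)
        + (1 - α) • (X' ω - X ω - ∫ ω', (X' ω' - X ω') ∂P)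
        + (1 - α) • (g - ∫ ω', X ω' ∂P) := by
    intro ω
    rw [integral_sub hX' hX]
    module
  simp only [hdecomp]
  have hD2 := (integral_norm_sub_integral_sq_le hXX).trans (integral_norm_sq_le_of_norm_le hlip)
  refine (integral_norm_smul_add_smul_add_const_sq_le
    (A := fun ω => X' ω - ∫ ω', X' ω' ∂P) (D := fun ω => X' ω - X ω - ∫ ω', (X' ω' - X ω') ∂P)
    (hX'.sub (integrable_const _)) (integral_sub_integral_eq_zero hX') (hXX.sub (memLp_const _))
    (integral_sub_integral_eq_zero (hXX.integrable one_le_two)) α (1 - α) _).trans ?_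
  rw [norm_smul, mul_pow, Real.norm_eq_abs, sq_abs]
  gcongr

end InnerProduct

theorem storm_variance_recursion_general {Ω : Type*} [MeasurableSpace Ω]
    (P : Measure Ω) [IsProbabilityMeasure P]
    (d : ℕ) (J : EuclideanSpace ℝ (Fin d) → ℝ)
    (Z : EuclideanSpace ℝ (Fin d) → Ω → EuclideanSpace ℝ (Fin d))
    (L σ : ℝ)
    (hint : ∀ θ, Integrable (Z θ) P)
    (hmean : ∀ θ, (∫ ω, Z θ ω ∂P) = gradient J θ)
    (hlipZ : ∀ ω θ₁ θ₂, ‖Z θ₁ ω - Z θ₂ ω‖ ≤ L * ‖θ₁ - θ₂‖)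
    (hvar : ∀ θ, (∫ ω, ‖Z θ ω - gradient J θ‖ ^ 2 ∂P) ≤ σ ^ 2)
    (θprev gprev : EuclideanSpace ℝ (Fin d)) (η β α : ℝ)
    (hη : 0 < η) (hα : α = β * η ^ 2) :
    (∫ ω, ‖(Z (θprev + η • gprev) ω + (1 - α) • (gprev - Z θprev ω))
        - gradient J (θprev + η • gprev)‖ ^ 2 ∂P) / η ≤
      2 * β ^ 2 * η ^ 3 * σ ^ 2
        + (1 - α) ^ 2 * (1 + 4 * L ^ 2 * η ^ 2) * (‖gprev - gradient J θprev‖ ^ 2 / η)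
        + 4 * (1 - α) ^ 2 * L ^ 2 * η * ‖gradient J θprev‖ ^ 2 := by
  set θ := θprev + η • gprev
  have hstep : ‖θ - θprev‖ = η * ‖gprev‖ := by
    simp [θ, norm_smul, abs_of_pos hη]
  have hstorm := integral_norm_storm_error_sq_le (hint θ) (hint θprev)
    ((hmean θ).symm ▸ hvar θ) (fun ω => hlipZ ω θ θprev) gprev α
  rw [hmean, hmean, hstep] at hstorm
  have hsplit := norm_add_sq_le_two_mul (gprev - gradient J θprev) (gradient J θprev)
  rw [sub_add_cancel] at hsplit
  rw [div_le_iff₀ hη]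
  calc _ ≤ 2 * α ^ 2 * σ ^ 2 + 2 * (1 - α) ^ 2 * L ^ 2 * η ^ 2 * ‖gprev‖ ^ 2
        + (1 - α) ^ 2 * ‖gprev - gradient J θprev‖ ^ 2 := by linarith
    _ ≤ 2 * α ^ 2 * σ ^ 2
        + 2 * (1 - α) ^ 2 * L ^ 2 * η ^ 2
          * (2 * (‖gprev - gradient J θprev‖ ^ 2 + ‖gradient J θprev‖ ^ 2))
        + (1 - α) ^ 2 * ‖gprev - gradient J θprev‖ ^ 2 := by gcongr
    _ = _ := by
      rw [hα]
      field_simp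
      ring

/-- Lemma 2 (single-step conditional STORM variance recursion): if `Z` is an unbiased
stochastic gradient estimator of `∇J` that is pointwise `L`-Lipschitz in `θ` and has
variance at most `σ²`, then for the STORM update
`g_t(ω) = Z(θ_t, ω) + (1 − α)(g_{t−1} − Z(θ_{t−1}, ω))` with `θ_t = θ_{t−1} + η g_{t−1}`
and `α = β η² ∈ [0, 1]`,
`E[‖ε_t‖²]/η ≤ 2β²η³σ² + (1 − α)²(1 + 4L²η²)‖ε_{t−1}‖²/η + 4(1 − α)²L²η‖∇J(θ_{t−1})‖²`. -/
theorem storm_variance_recursion {Ω : Type*} [MeasurableSpace Ω]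
    (P : Measure Ω) [IsProbabilityMeasure P]
    (d : ℕ) (J : EuclideanSpace ℝ (Fin d) → ℝ) (hdiff : Differentiable ℝ J)
    (Z : EuclideanSpace ℝ (Fin d) → Ω → EuclideanSpace ℝ (Fin d))
    (L σ : ℝ) (hL : 0 < L)
    (hint : ∀ θ, Integrable (Z θ) P)
    (hmean : ∀ θ, (∫ ω, Z θ ω ∂P) = gradient J θ)
    (hlipZ : ∀ ω θ₁ θ₂, ‖Z θ₁ ω - Z θ₂ ω‖ ≤ L * ‖θ₁ - θ₂‖)
    (hvar : ∀ θ, (∫ ω, ‖Z θ ω - gradient J θ‖ ^ 2 ∂P) ≤ σ ^ 2)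
    (θprev gprev : EuclideanSpace ℝ (Fin d)) (η β α : ℝ)
    (hη : 0 < η) (hβ : 0 ≤ β) (hα : α = β * η ^ 2) (hα0 : 0 ≤ α) (hα1 : α ≤ 1) :
    (∫ ω, ‖(Z (θprev + η • gprev) ω + (1 - α) • (gprev - Z θprev ω))
        - gradient J (θprev + η • gprev)‖ ^ 2 ∂P) / η ≤
      2 * β ^ 2 * η ^ 3 * σ ^ 2
        + (1 - α) ^ 2 * (1 + 4 * L ^ 2 * η ^ 2) * (‖gprev - gradient J θprev‖ ^ 2 / η)
        + 4 * (1 - α) ^ 2 * L ^ 2 * η * ‖gradient J θprev‖ ^ 2 :=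
  storm_variance_recursion_general P d J Z L σ hint hmean hlipZ hvar θprev gprev η β α hη hα
end

section
/- Let k > 0, L > 0, G > 0 and w ≥ max((4Lk)³, 2G²). Let G_i (i ≥ 1) be reals with 0 ≤ G_i ≤ G for all i, and define η_t = k / (w + Σ_{i=1}^{t} G_i²)^{1/3} for t ≥ 0. Then for every t ≥ 1, 1/η_t − 1/η_{t−1} ≤ (G² / (7 L k³)) · η_t. -/
/-!
Write `y = A^{1/3}` and `x = B^{1/3}` for `A = w + ∑_{i=1}^{t-1} G_i²` and `B = A + G_t²`,
so that `1/η_t − 1/η_{t−1} = (x − y)/k`. Since `x³ − y³ = G_t² ≤ G²` and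
`(x − y)·3y² ≤ x³ − y³`, the difference `x − y` is at most `G²/(3y²)`. The assumption
`w ≥ 2G²` keeps `x³ ≤ (3/2) y³`, hence `x ≤ (12/7) y`, and `w ≥ (4Lk)³` gives `y ≥ 4Lk`;
together `7Lk·x ≤ 12Lk·y ≤ 3y²`, which turns `3y²` into `7Lk·x = 7Lk³/η_t`.
-/

open Finset

section CubeDifference

variable {α : Type*} [Field α] [LinearOrder α] [IsStrictOrderedRing α]

theorem sub_mul_three_mul_sq_le_pow_three_sub_pow_three {x y : α} (hy : 0 ≤ y) (hyx : y ≤ x) :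
    (x - y) * (3 * y ^ 2) ≤ x ^ 3 - y ^ 3 := by
  linear_combination mul_nonneg (sq_nonneg (x - y)) (by linarith : 0 ≤ x + 2 * y)

theorem le_mul_of_pow_three_le {x y : α} (hy : 0 ≤ y)
    (h : x ^ 3 ≤ 3 / 2 * y ^ 3) : x ≤ 12 / 7 * y := by
  refine le_of_pow_le_pow_left₀ three_ne_zero (by positivity) ?_
  linear_combination h + (1728 / 343 - 3 / 2 : α) * pow_nonneg hy 3

theorem seven_mul_mul_sub_le_of_pow_three_sub_le {c x y D : α} (hc : 0 ≤ c) (hcy : 4 * c ≤ y)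
    (hyx : y ≤ x) (hD : x ^ 3 - y ^ 3 ≤ D) (hDy : 2 * D ≤ y ^ 3) :
    7 * c * x * (x - y) ≤ D := by
  have hy : 0 ≤ y := by linarith
  have hx_le : x ≤ 12 / 7 * y := le_mul_of_pow_three_le hy (by linarith)
  have hcx : 7 * c * x ≤ 3 * y ^ 2 := by
    linarith [mul_le_mul_of_nonneg_left hx_le hc, mul_le_mul_of_nonneg_right hcy hy]
  calc 7 * c * x * (x - y) ≤ 3 * y ^ 2 * (x - y) :=
        mul_le_mul_of_nonneg_right hcx (sub_nonneg.mpr hyx)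
    _ = (x - y) * (3 * y ^ 2) := by ring
    _ ≤ x ^ 3 - y ^ 3 := sub_mul_three_mul_sq_le_pow_three_sub_pow_three hy hyx
    _ ≤ D := hD

end CubeDifference

theorem Real.rpow_one_div_three_pow_three {A : ℝ} (hA : 0 ≤ A) : (A ^ ((1 : ℝ) / 3)) ^ 3 = A := by
  simpa using Real.rpow_inv_natCast_pow hA three_ne_zero

theorem storm_stepsize_diff_bound_general (k L G w : ℝ) (hk : 0 < k) (hL : 0 < L)
    (hw : max ((4 * L * k) ^ 3) (2 * G ^ 2) ≤ w)
    (Gs : ℕ → ℝ) (hGs : ∀ i, 1 ≤ i → 0 ≤ Gs i ∧ Gs i ≤ G)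
    (η : ℕ → ℝ)
    (hη : ∀ t, η t = k / (w + ∑ i ∈ Finset.Icc 1 t, (Gs i) ^ 2) ^ ((1 : ℝ) / 3))
    (t : ℕ) (ht : 1 ≤ t) :
    1 / η t - 1 / η (t - 1) ≤ (G ^ 2 / (7 * L * k ^ 3)) * η t := by
  obtain ⟨s, rfl⟩ : ∃ s, t = s + 1 := ⟨t - 1, by omega⟩
  obtain ⟨hw₁, hw₂⟩ := max_le_iff.mp hw
  set A := w + ∑ i ∈ Icc 1 s, Gs i ^ 2
  have hwA : w ≤ A := le_add_of_nonneg_right (sum_nonneg fun i _ => sq_nonneg _)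
  have hA : 0 ≤ A := (by positivity : 0 ≤ (4 * L * k) ^ 3).trans (hw₁.trans hwA)
  have hB : w + ∑ i ∈ Icc 1 (s + 1), Gs i ^ 2 = A + Gs (s + 1) ^ 2 := by
    rw [sum_Icc_succ_top (by omega), add_assoc]
  obtain ⟨hg₀, hgG⟩ := hGs (s + 1) (by omega)
  set y := A ^ ((1 : ℝ) / 3)
  set x := (A + Gs (s + 1) ^ 2) ^ ((1 : ℝ) / 3) with hx_def
  have hy3 : y ^ 3 = A := Real.rpow_one_div_three_pow_three hA
  have hx3 : x ^ 3 = A + Gs (s + 1) ^ 2 := Real.rpow_one_div_three_pow_three (by positivity)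
  have hyx : y ≤ x := Real.rpow_le_rpow hA (le_add_of_nonneg_right (sq_nonneg _)) (by norm_num)
  have hLky : 4 * (L * k) ≤ y := by
    refine le_of_pow_le_pow_left₀ three_ne_zero (Real.rpow_nonneg hA _) ?_
    rw [hy3, ← mul_assoc]
    exact hw₁.trans hwA
  have hkey : 7 * (L * k) * x * (x - y) ≤ G ^ 2 :=
    seven_mul_mul_sub_le_of_pow_three_sub_le (by positivity) hLky hyx
      (by rw [hx3, hy3, add_sub_cancel_left]; exact pow_le_pow_left₀ hg₀ hgG 2)
      (hw₂.trans (hwA.trans hy3.ge))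
  have hx_pos : 0 < x := by linarith [mul_pos hL hk]
  rw [hη, hη, Nat.add_sub_cancel, hB, one_div_div, one_div_div, ← hx_def, div_sub_div_same,
    div_mul_div_comm, div_le_div_iff₀ hk (by positivity)]
  linear_combination k ^ 2 * hkey

/-- Stepsize-difference estimate: with `η_t = k / (w + ∑_{i=1}^t G_i²)^{1/3}`,
`0 ≤ G_i ≤ G`, and `w ≥ max((4Lk)³, 2G²)`, for every `t ≥ 1`,
`1/η_t − 1/η_{t−1} ≤ (G²/(7 L k³)) η_t`. -/
theorem storm_stepsize_diff_bound (k L G w : ℝ) (hk : 0 < k) (hL : 0 < L) (hG : 0 < G)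
    (hw : max ((4 * L * k) ^ 3) (2 * G ^ 2) ≤ w)
    (Gs : ℕ → ℝ) (hGs : ∀ i, 1 ≤ i → 0 ≤ Gs i ∧ Gs i ≤ G)
    (η : ℕ → ℝ)
    (hη : ∀ t, η t = k / (w + ∑ i ∈ Finset.Icc 1 t, (Gs i) ^ 2) ^ ((1 : ℝ) / 3))
    (t : ℕ) (ht : 1 ≤ t) :
    1 / η t - 1 / η (t - 1) ≤ (G ^ 2 / (7 * L * k ^ 3)) * η t :=
  storm_stepsize_diff_bound_general k L G w hk hL hw Gs hGs η hη t ht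
end

section
/- Let L > 0, k > 0, G > 0, and β = 28 L² + G² / (7 L k³). Let η, η' > 0 satisfy 1/η − 1/η' ≤ (G² / (7 L k³)) · η, and let α = β η² with 0 ≤ α ≤ 1. Then (1/η)(1 − α)(1 + 4 L² η²) − 1/η' ≤ −24 L² η. -/
theorem one_div_mul_one_sub_mul_one_add_le {η α c : ℝ} (hη : 0 < η) (hα : 0 ≤ α) (hc : 0 ≤ c) :
    1 / η * (1 - α) * (1 + c * η ^ 2) ≤ 1 / η + c * η - α / η := by
  have hexpand : 1 / η * (1 - α) * (1 + c * η ^ 2) = 1 / η + c * η - α / η - α * c * η := by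
    field_simp
    ring
  have : 0 ≤ α * c * η := by positivity
  linarith

theorem storm_coefficient_bound_general (L k G : ℝ)
    (β : ℝ) (hβ : β = 28 * L ^ 2 + G ^ 2 / (7 * L * k ^ 3))
    (η η' : ℝ) (hη : 0 < η)
    (hdiff : 1 / η - 1 / η' ≤ (G ^ 2 / (7 * L * k ^ 3)) * η)
    (α : ℝ) (hα : α = β * η ^ 2) (hα0 : 0 ≤ α) :
    (1 / η) * (1 - α) * (1 + 4 * L ^ 2 * η ^ 2) - 1 / η' ≤ -24 * L ^ 2 * η := by
  have hαη : α / η = β * η := by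
    rw [hα]
    field_simp
  calc (1 / η) * (1 - α) * (1 + 4 * L ^ 2 * η ^ 2) - 1 / η'
      ≤ 1 / η + 4 * L ^ 2 * η - α / η - 1 / η' :=
        sub_le_sub_right (one_div_mul_one_sub_mul_one_add_le hη hα0 (by positivity)) _
    _ = (1 / η - 1 / η') - (G ^ 2 / (7 * L * k ^ 3)) * η - 24 * L ^ 2 * η := by
        rw [hαη, hβ]
        ring
    _ ≤ -24 * L ^ 2 * η := by linarith

/-- Bound on the coefficient of `‖ε_t‖²` in the potential analysis: with
`β = 28 L² + G²/(7 L k³)`, if `1/η − 1/η' ≤ (G²/(7 L k³)) η` and `α = β η² ∈ [0, 1]`, then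
`(1/η)(1 − α)(1 + 4 L² η²) − 1/η' ≤ −24 L² η`. -/
theorem storm_coefficient_bound (L k G : ℝ) (hL : 0 < L) (hk : 0 < k) (hG : 0 < G)
    (β : ℝ) (hβ : β = 28 * L ^ 2 + G ^ 2 / (7 * L * k ^ 3))
    (η η' : ℝ) (hη : 0 < η) (hη' : 0 < η')
    (hdiff : 1 / η - 1 / η' ≤ (G ^ 2 / (7 * L * k ^ 3)) * η)
    (α : ℝ) (hα : α = β * η ^ 2) (hα0 : 0 ≤ α) (hα1 : α ≤ 1) :
    (1 / η) * (1 - α) * (1 + 4 * L ^ 2 * η ^ 2) - 1 / η' ≤ -24 * L ^ 2 * η :=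
  storm_coefficient_bound_general L k G β hβ η η' hη hdiff α hα hα0
end
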